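/- arXiv:2406.02901 — 7 statements merged into one kernel-verified Lean document; each statement's English description precedes it below -/
import Mathlib

section
/- Let F be a function from the open unit disc D in ℂ to ℂ such that 0 ≤ Re F(z) ≤ 1 for all z ∈ D, and such that the function z ↦ F(z) + z·conj(F(z)) is holomorphic on D. Then F is constant on D. -/
/-!
Put `K z = F z + z * conj (F z)`, holomorphic on the disc. Then
`K z - z * conj (K z) = (1 - |z|²) F z`, so `h = Re (K - z conj K)` satisfies `|h| ≤ 1 - |z|²`.
On the circle `|z| = r` we have `conj z = r² / z`, so the Cauchy integral `∮ h(z) / (z - w) dz`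
can be computed by residues from `K w`, `K 0` and `K' 0`; it is `O(1 - r²)`, and letting `r → 1`
gives `(1 - w) K w = K 0 + w (1 - w) conj (K 0) - w conj (K' 0)` on the whole disc.
Differentiating at `0` gives `Re K' 0 = Re K 0`, and then `F w = F 0 + i s w / |1 - w|²` with
`s` real. As `Im w / |1 - w|²` is unbounded on the disc while `Re F` is bounded, `s = 0`.
-/

open Complex Metric Set Filter
open scoped Real Topology ComplexConjugate

lemma conj_eq_norm_sq_div (z : ℂ) : conj z = (‖z‖ : ℂ) ^ 2 / z := by
  rcases eq_or_ne z 0 with rfl | hz0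
  · simp
  · rw [eq_div_iff hz0, mul_comm, mul_conj']

lemma conj_circleIntegral (f : ℂ → ℂ) (c : ℂ) (R : ℝ) :
    conj (∮ z in C(c, R), f z) = ∮ z in C(c, R), -((R : ℂ) ^ 2 / (z - c) ^ 2) * conj (f z) := by
  simp only [circleIntegral, deriv_circleMap, smul_eq_mul]
  rw [← intervalIntegral.intervalIntegral_conj]
  refine intervalIntegral.integral_congr fun θ _ => ?_
  have hu : circleMap c R θ - c = circleMap 0 R θ := by simp [circleMap]
  rw [hu, map_mul, map_mul, conj_eq_norm_sq_div, norm_circleMap_zero, conj_I, ← ofReal_pow, sq_abs,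
    ofReal_pow]
  rcases eq_or_ne (circleMap 0 R θ) 0 with h | h
  · simp [h]
  · field_simp

lemma circleIntegral_sub_inv_mul_one_sub_div_mul {K : ℂ → ℂ} {r : ℝ}
    (hK : DifferentiableOn ℂ K (closedBall 0 r)) {w : ℂ} (hw : w ∈ ball 0 r) (hw0 : w ≠ 0)
    (a : ℂ) :
    ∮ z in C(0, r), (z - w)⁻¹ * ((1 - a / z) * K z)
      = 2 * π * I * ((1 - a / w) * K w + a / w * K 0) := by
  have hr : 0 < r := pos_of_mem_ball hw
  have h0 : (0 : ℂ) ∈ ball 0 r := mem_ball_self hr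
  set G : ℂ → ℂ := fun z => (z - a) * K z
  have hG : DifferentiableOn ℂ G (closedBall 0 r) := by fun_prop
  have hne : ∀ z ∈ sphere (0 : ℂ) r, z - w ≠ 0 := fun z hz =>
    sub_ne_zero.2 (sphere_disjoint_ball.ne_of_mem hz hw)
  have hne0 : ∀ z ∈ sphere (0 : ℂ) r, z - 0 ≠ 0 := fun z hz =>
    sub_ne_zero.2 (sphere_disjoint_ball.ne_of_mem hz h0)
  have hGc : ContinuousOn G (sphere 0 r) := hG.continuousOn.mono sphere_subset_closedBall
  -- partial fractions: `(z - w)⁻¹ z⁻¹ = w⁻¹ ((z - w)⁻¹ - z⁻¹)`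
  have hsplit : EqOn (fun z => (z - w)⁻¹ * ((1 - a / z) * K z))
      (fun z => w⁻¹ * ((z - w)⁻¹ • G z - (z - 0)⁻¹ • G z)) (sphere 0 r) := by
    intro z hz
    have hzw := hne z hz
    have hz0 : z ≠ 0 := by simpa using hne0 z hz
    simp only [G, smul_eq_mul, sub_zero]
    field_simp
    ring
  rw [circleIntegral.integral_congr hr.le hsplit, circleIntegral.integral_const_mul,
    circleIntegral.integral_sub
      (ContinuousOn.circleIntegrable hr.le (by fun_prop (disch := assumption)))
      (ContinuousOn.circleIntegrable hr.le (by fun_prop (disch := assumption))),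
    hG.circleIntegral_sub_inv_smul hw, hG.circleIntegral_sub_inv_smul h0]
  simp only [G, smul_eq_mul]
  field_simp
  ring

lemma conj_circleIntegral_sub_inv_mul_one_sub_mul_conj {K : ℂ → ℂ} {r : ℝ}
    (hK : DifferentiableOn ℂ K (closedBall 0 r)) {w : ℂ} (hw : w ∈ ball 0 r) :
    conj (∮ z in C(0, r), (z - w)⁻¹ * ((1 - z) * conj (K z)))
      = 2 * π * I * ((conj w - 1) * K 0 + r ^ 2 * deriv K 0) := by
  have hr : 0 < r := pos_of_mem_ball hw
  have hwr : ‖w‖ < r := mem_ball_zero_iff.1 hw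
  have hden : ∀ z ∈ closedBall (0 : ℂ) r, (r : ℂ) ^ 2 - conj w * z ≠ 0 := by
    intro z hz h
    have h' : ‖w‖ * ‖z‖ = r ^ 2 := by
      simpa [norm_mul, ← ofReal_pow, abs_of_pos hr] using congrArg norm (sub_eq_zero.1 h).symm
    nlinarith [mul_le_mul_of_nonneg_left (mem_closedBall_zero_iff.1 hz) (norm_nonneg w),
      mul_lt_mul_of_pos_right hwr hr]
  -- on the circle `conj z = r² / z`, which turns the integrand into `z⁻² q(z) K(z)`
  set q : ℂ → ℂ := fun z => r ^ 2 * (r ^ 2 - z) / (r ^ 2 - conj w * z)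
  have hq : DifferentiableOn ℂ q (closedBall 0 r) := by fun_prop (disch := exact hden)
  have hr' : (r : ℂ) ≠ 0 := ofReal_ne_zero.2 hr.ne'
  have hq' : HasDerivAt q (conj w - 1) 0 := by
    refine ((((hasDerivAt_id' (0 : ℂ)).const_sub ((r : ℂ) ^ 2)).const_mul ((r : ℂ) ^ 2)).fun_div
      (((hasDerivAt_id' (0 : ℂ)).const_mul (conj w)).const_sub ((r : ℂ) ^ 2))
      (hden 0 (mem_closedBall_self hr.le))).congr_deriv ?_
    field_simp
    ring
  have hK' : HasDerivAt K (deriv K 0) 0 :=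
    (hK.differentiableAt (closedBall_mem_nhds 0 hr)).hasDerivAt
  have hcongr : EqOn
      (fun z => -((r : ℂ) ^ 2 / (z - 0) ^ 2) * conj ((z - w)⁻¹ * ((1 - z) * conj (K z))))
      (fun z => (1 / (z - 0) ^ 2) • (q z * K z)) (sphere 0 r) := by
    intro z hz
    have hz0 : z ≠ 0 := ne_zero_of_mem_sphere hr.ne' ⟨z, hz⟩
    have hzr : ‖z‖ = r := mem_sphere_zero_iff_norm.1 hz
    have hd := hden z (sphere_subset_closedBall hz)
    simp only [q, smul_eq_mul, sub_zero, map_mul, map_inv₀, map_sub, map_one, conj_conj,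
      conj_eq_norm_sq_div z, hzr]
    have : (r : ℂ) ^ 2 / z - conj w ≠ 0 := by
      rw [div_sub' hz0]; exact div_ne_zero (by rwa [mul_comm]) hz0
    field_simp
    ring
  rw [conj_circleIntegral, circleIntegral.integral_congr hr.le hcongr,
    (hq.fun_mul hK).deriv_eq_smul_circleIntegral hr, (hq'.fun_mul hK').deriv]
  simp only [q, smul_eq_mul]
  field_simp
  ring

lemma circleIntegral_sub_inv_mul_re_sub_mul_conj {K : ℂ → ℂ} {r : ℝ}
    (hK : DifferentiableOn ℂ K (closedBall 0 r)) {w : ℂ} (hw : w ∈ ball 0 r) (hw0 : w ≠ 0) :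
    ∮ z in C(0, r), (z - w)⁻¹ * ((K z - z * conj (K z)).re : ℂ)
      = π * I * ((1 - r ^ 2 / w) * K w + r ^ 2 / w * K 0 + (1 - w) * conj (K 0)
          - r ^ 2 * conj (deriv K 0)) := by
  have hr : 0 < r := pos_of_mem_ball hw
  have hne : ∀ z ∈ sphere (0 : ℂ) r, z - w ≠ 0 := fun z hz =>
    sub_ne_zero.2 (sphere_disjoint_ball.ne_of_mem hz hw)
  have hne0 : ∀ z ∈ sphere (0 : ℂ) r, z ≠ 0 := fun z hz => ne_zero_of_mem_sphere hr.ne' ⟨z, hz⟩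
  have hKc : ContinuousOn K (sphere 0 r) := hK.continuousOn.mono sphere_subset_closedBall
  have hsplit : EqOn (fun z => (z - w)⁻¹ * ((K z - z * conj (K z)).re : ℂ))
      (fun z => 2⁻¹ * ((z - w)⁻¹ * ((1 - r ^ 2 / z) * K z) + (z - w)⁻¹ * ((1 - z) * conj (K z))))
      (sphere 0 r) := by
    intro z hz
    simp only
    rw [re_eq_add_conj, map_sub, map_mul, conj_conj, conj_eq_norm_sq_div z,
      mem_sphere_zero_iff_norm.1 hz]
    ring
  rw [circleIntegral.integral_congr hr.le hsplit, circleIntegral.integral_const_mul,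
    circleIntegral.integral_add
      (ContinuousOn.circleIntegrable hr.le (by fun_prop (disch := assumption)))
      (ContinuousOn.circleIntegrable hr.le (by fun_prop (disch := assumption))),
    circleIntegral_sub_inv_mul_one_sub_div_mul hK hw hw0, ← conj_conj (∮ z in C(0, r), _),
    conj_circleIntegral_sub_inv_mul_one_sub_mul_conj hK hw]
  simp only [map_mul, map_add, map_sub, map_one, map_ofNat, map_pow, conj_ofReal, conj_I, conj_conj]
  ring

lemma norm_circleIntegral_sub_inv_mul_le {f : ℂ → ℂ} {c w : ℂ} {r M : ℝ} (hw : w ∈ ball c r)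
    (hf : ∀ z ∈ sphere c r, ‖f z‖ ≤ M) :
    ‖∮ z in C(c, r), (z - w)⁻¹ * f z‖ ≤ 2 * π * r * (M / (r - ‖w - c‖)) := by
  have hwr : ‖w - c‖ < r := mem_ball_iff_norm.1 hw
  refine circleIntegral.norm_integral_le_of_norm_le_const (pos_of_mem_ball hw).le fun z hz => ?_
  have hdist : r - ‖w - c‖ ≤ ‖z - w‖ := by
    calc r - ‖w - c‖ = ‖z - c‖ - ‖w - c‖ := by rw [mem_sphere_iff_norm.1 hz]
      _ ≤ ‖z - w‖ := by simpa using norm_sub_norm_le (z - c) (w - c)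
  rw [norm_mul, norm_inv, div_eq_inv_mul]
  exact mul_le_mul (inv_anti₀ (by linarith) hdist) (hf z hz) (norm_nonneg _)
    (inv_nonneg.2 (by linarith))

lemma one_sub_mul_eq_of_abs_re_sub_mul_conj_le {K : ℂ → ℂ}
    (hK : DifferentiableOn ℂ K (ball 0 1))
    (hb : ∀ z ∈ ball (0 : ℂ) 1, |(K z - z * conj (K z)).re| ≤ 1 - ‖z‖ ^ 2)
    {w : ℂ} (hw : w ∈ ball 0 1) :
    (1 - w) * K w = K 0 + w * (1 - w) * conj (K 0) - w * conj (deriv K 0) := by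
  rcases eq_or_ne w 0 with rfl | hw0
  · simp
  have hw1 : ‖w‖ < 1 := mem_ball_zero_iff.1 hw
  set E : ℝ → ℂ := fun r => (1 - r ^ 2 / w) * K w + r ^ 2 / w * K 0 + (1 - w) * conj (K 0)
    - r ^ 2 * conj (deriv K 0)
  have hbound : ∀ r ∈ Ioo ‖w‖ 1, π * ‖E r‖ ≤ 2 * π * r * ((1 - r ^ 2) / (r - ‖w‖)) := by
    rintro r ⟨hwr, hr1⟩
    have hKr : DifferentiableOn ℂ K (closedBall 0 r) := hK.mono (closedBall_subset_ball hr1)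
    have h := norm_circleIntegral_sub_inv_mul_le (c := 0) (M := 1 - r ^ 2)
      (f := fun z => ((K z - z * conj (K z)).re : ℂ)) (mem_ball_zero_iff.2 hwr) fun z hz => by
        rw [norm_real, Real.norm_eq_abs, ← mem_sphere_zero_iff_norm.1 hz]
        exact hb z (sphere_subset_closedBall.trans (closedBall_subset_ball hr1) hz)
    rwa [circleIntegral_sub_inv_mul_re_sub_mul_conj hKr (mem_ball_zero_iff.2 hwr) hw0, norm_mul,
      norm_mul, norm_I, norm_real, Real.norm_of_nonneg Real.pi_pos.le, mul_one, sub_zero] at h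
  have hlimE : Tendsto (fun r => π * ‖E r‖) (𝓝[<] 1) (𝓝 (π * ‖E 1‖)) :=
    ((by fun_prop : Continuous fun r => π * ‖E r‖).tendsto 1).mono_left nhdsWithin_le_nhds
  have hlimB : Tendsto (fun r : ℝ => 2 * π * r * ((1 - r ^ 2) / (r - ‖w‖))) (𝓝[<] 1) (𝓝 0) := by
    have hc : ContinuousAt (fun r : ℝ => 2 * π * r * ((1 - r ^ 2) / (r - ‖w‖))) 1 :=
      by fun_prop (disch := exact sub_ne_zero.2 hw1.ne')
    simpa using hc.tendsto.mono_left nhdsWithin_le_nhds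
  have hE1 : E 1 = 0 := by
    have h := le_of_tendsto_of_tendsto hlimE hlimB
      (Filter.eventually_of_mem (Ioo_mem_nhdsLT hw1) hbound)
    exact norm_le_zero_iff.1 (nonpos_of_mul_nonpos_right h Real.pi_pos)
  simp only [E, ofReal_one, one_pow] at hE1
  field_simp at hE1
  linear_combination -hE1

lemma add_mul_conj_sub_mul_conj (u z : ℂ) :
    u + z * conj u - z * conj (u + z * conj u) = (1 - ‖z‖ ^ 2) * u := by
  rw [map_add, map_mul, conj_conj, ← mul_conj']
  ring

lemma abs_re_add_mul_conj_sub_mul_conj_le {u z : ℂ} (hu : 0 ≤ u.re ∧ u.re ≤ 1) (hz : ‖z‖ ≤ 1) :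
    |(u + z * conj u - z * conj (u + z * conj u)).re| ≤ 1 - ‖z‖ ^ 2 := by
  have hz1 : 0 ≤ 1 - ‖z‖ ^ 2 := by nlinarith [norm_nonneg z]
  rw [add_mul_conj_sub_mul_conj, ← ofReal_pow, ← ofReal_one, ← ofReal_sub, re_ofReal_mul, abs_mul,
    abs_of_nonneg hz1, abs_of_nonneg hu.1]
  exact mul_le_of_le_one_right hz1 hu.2

lemma re_deriv_eq_re_of_one_sub_mul_eventuallyEq {K : ℂ → ℂ} (hK : DifferentiableAt ℂ K 0)
    (h : (fun w => (1 - w) * K w)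
      =ᶠ[𝓝 0] fun w => K 0 + w * (1 - w) * conj (K 0) - w * conj (deriv K 0)) :
    (deriv K 0).re = (K 0).re := by
  have hL : HasDerivAt (fun w => (1 - w) * K w) (deriv K 0 - K 0) 0 := by
    refine (((hasDerivAt_id' 0).const_sub 1).fun_mul hK.hasDerivAt).congr_deriv ?_
    simp only [neg_mul, one_mul, sub_zero]
    ring
  have hR : HasDerivAt (fun w => K 0 + w * (1 - w) * conj (K 0) - w * conj (deriv K 0))
      (conj (K 0) - conj (deriv K 0)) 0 := by
    refine (((((hasDerivAt_id' 0).fun_mul ((hasDerivAt_id' 0).const_sub 1)).mul_const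
      (conj (K 0))).const_add (K 0)).sub
        ((hasDerivAt_id' 0).mul_const (conj (deriv K 0)))).congr_deriv ?_
    simp
  have h' := congrArg re (hL.deriv.symm.trans (h.deriv_eq.trans hR.deriv))
  simp only [sub_re, conj_re] at h'
  linarith

lemma eq_add_I_mul_div_normSq_of_one_sub_mul_eq {u w A B : ℂ} (hw : ‖w‖ < 1)
    (hAB : B.re = A.re)
    (h : (1 - w) * (u + w * conj u) = A + w * (1 - w) * conj A - w * conj B) :
    u = A + I * (A + B).im * w / normSq (1 - w) := by
  have hB : conj B = A - I * (A + B).im := by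
    apply Complex.ext <;> simp [hAB]
  set s : ℝ := (A + B).im
  have hw1 : (1 : ℂ) - w ≠ 0 := by
    rintro hw1
    rw [← sub_eq_zero.1 hw1, norm_one] at hw
    exact lt_irrefl 1 hw
  have hnw : (1 : ℂ) - w * conj w ≠ 0 := by
    rw [mul_conj', ← ofReal_pow, ← ofReal_one, ← ofReal_sub, ofReal_ne_zero]
    nlinarith [norm_nonneg w]
  have hconj := congrArg conj h
  simp only [map_mul, map_add, map_sub, map_one, conj_conj, hB, conj_I, conj_ofReal] at hconj
  rw [hB] at h
  -- `(1 - |w|²) u = v - w conj v` for `v = u + w conj u`, and `h`, `conj h` give `(1 - w) v`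
  have key : (1 - w * conj w) *
      (conj (1 - w) * (1 - w) * u - (conj (1 - w) * (1 - w) * A + I * s * w)) = 0 := by
    simp only [map_sub, map_one]
    linear_combination (1 - conj w) * h - w * (1 - w) * hconj
  have hc : conj (1 - w) ≠ 0 := (map_ne_zero _).2 hw1
  rw [normSq_eq_conj_mul_self]
  field_simp
  linear_combination (mul_eq_zero.1 key).resolve_left hnw

lemma eq_zero_of_forall_abs_mul_im_div_normSq_le {s : ℝ}
    (h : ∀ w ∈ ball (0 : ℂ) 1, |s * (w.im / normSq (1 - w))| ≤ 1) : s = 0 := by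
  by_contra hs
  have hs' : 0 < |s| := abs_pos.2 hs
  set m := min (1 / 2) (|s| / 4)
  have hm : 0 < m := lt_min (by norm_num) (by positivity)
  have hm2 : m ≤ 1 / 2 := min_le_left _ _
  -- along `w = 1 - m + m i` the ratio `Im w / |1 - w|²` is `1 / (2m)`
  have hw : (⟨1 - m, m⟩ : ℂ) ∈ ball (0 : ℂ) 1 := by
    rw [mem_ball_zero_iff, ← sq_lt_one_iff₀ (norm_nonneg _), Complex.sq_norm, normSq_mk]
    nlinarith
  have hbound := h _ hw
  have hratio : s * ((⟨1 - m, m⟩ : ℂ).im / normSq (1 - ⟨1 - m, m⟩)) = s / (2 * m) := by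
    simp only [normSq_apply, sub_re, one_re, sub_sub_cancel, sub_im, one_im, zero_sub, mul_neg,
      neg_mul, neg_neg]
    field_simp
    ring
  rw [hratio, abs_div, abs_of_pos (by positivity : (0 : ℝ) < 2 * m),
    div_le_one (by positivity)] at hbound
  linarith [min_le_right (1 / 2) (|s| / 4)]

/-- If `F` maps the open unit disc into the strip `{0 ≤ Re z ≤ 1}` and
`z ↦ F z + z * conj (F z)` is holomorphic on the disc, then `F` is constant on the disc. -/
theorem stmt_0 (F : ℂ → ℂ)
    (hre : ∀ z ∈ Metric.ball (0 : ℂ) 1, 0 ≤ (F z).re ∧ (F z).re ≤ 1)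
    (hhol : ∀ z ∈ Metric.ball (0 : ℂ) 1,
      DifferentiableAt ℂ (fun w => F w + w * (starRingEnd ℂ) (F w)) z) :
    ∃ c : ℂ, ∀ z ∈ Metric.ball (0 : ℂ) 1, F z = c := by
  set K : ℂ → ℂ := fun w => F w + w * conj (F w)
  have hK : DifferentiableOn ℂ K (ball 0 1) := fun z hz => (hhol z hz).differentiableWithinAt
  have hb : ∀ z ∈ ball (0 : ℂ) 1, |(K z - z * conj (K z)).re| ≤ 1 - ‖z‖ ^ 2 := fun z hz =>
    abs_re_add_mul_conj_sub_mul_conj_le (hre z hz) (mem_ball_zero_iff.1 hz).le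
  have hid := fun w (hw : w ∈ ball (0 : ℂ) 1) => one_sub_mul_eq_of_abs_re_sub_mul_conj_le hK hb hw
  have hAB : (deriv K 0).re = (K 0).re :=
    re_deriv_eq_re_of_one_sub_mul_eventuallyEq (hhol 0 (mem_ball_self one_pos))
      (Filter.eventually_of_mem (ball_mem_nhds 0 one_pos) hid)
  have hF : ∀ w ∈ ball (0 : ℂ) 1,
      F w = K 0 + I * (K 0 + deriv K 0).im * w / normSq (1 - w) := fun w hw =>
    eq_add_I_mul_div_normSq_of_one_sub_mul_eq (mem_ball_zero_iff.1 hw) hAB (hid w hw)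
  have hs : (K 0 + deriv K 0).im = 0 := by
    refine eq_zero_of_forall_abs_mul_im_div_normSq_le fun w hw => ?_
    have hA : 0 ≤ (K 0).re ∧ (K 0).re ≤ 1 := by simpa [K] using hre 0 (mem_ball_self one_pos)
    have h : (F w).re = (K 0).re - (K 0 + deriv K 0).im * (w.im / normSq (1 - w)) := by
      rw [hF w hw, add_re, div_ofReal_re]
      simp only [mul_re, mul_im, I_re, I_im, ofReal_re, ofReal_im]
      ring
    rw [abs_le]
    constructor <;> linarith [hre w hw]
  refine ⟨K 0, fun w hw => ?_⟩
  simpa [hs] using hF w hw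
end

section
/- Let H be a complex separable Hilbert space and let F : D → B(H) be a function such that for every z ∈ D the real part Re F(z) := (F(z) + F(z)*)/2 is a positive operator satisfying Re F(z) ≤ I, and such that the function z ↦ F(z) + z·F(z)* is holomorphic on D. Then F is constant on D. -/
/-!
Pairing with a vector `x` reduces the theorem to the scalar function `f = ⟪x, F(·) x⟫`, which
satisfies `0 ≤ Re f ≤ ‖x‖²` with `g = f + z f̄` holomorphic; over `ℂ` an operator is determined
by its quadratic form.

For the scalar statement, `Re ((1 - z̄) g(z)) = (1 - |z|²) Re f(z)` lies between `0` and
`M (1 - |z|²)`. Its Fourier coefficients on the circle `|z| = r` are explicit in the Taylor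
coefficients `cₙ` of `g`, and letting `r → 1` gives `c₁ = c₂ + c̄₀` and `cₙ = c₂` for `n ≥ 2`,
so `g = c₀ + c₁ z + c₂ z² / (1 - z)`. Along `z = 1 - tω`, `Re ω > 0`, the weighted real part
tends to `Re (c₂ ω̄ / ω)` as `t → 0⁺`, which must vanish; `ω = 1` and `ω = 1 + i` give `c₂ = 0`.
Then `f + z f̄ = c₀ + z c̄₀`, and since `|z| < 1` this forces `f = c₀`.
-/

open ContinuousLinearMap
open Complex ComplexConjugate Metric Filter Topology Real

noncomputable def taylorCoeff (g : ℂ → ℂ) (n : ℕ) : ℂ :=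
  (n.factorial : ℂ)⁻¹ * iteratedDeriv n g 0

section Scalar

variable {g : ℂ → ℂ} {r : ℝ}

lemma conj_eq_div_of_mem_sphere {z : ℂ} (hz : z ∈ sphere (0 : ℂ) r) (hr : r ≠ 0) :
    conj z = r ^ 2 / z := by
  rw [eq_div_iff (ne_of_mem_sphere hz hr), mul_comm, mul_conj, normSq_eq_norm_sq]
  simp_all

lemma circleAverage_conj_pow_mul (hg : DifferentiableOn ℂ g (closedBall 0 r)) (hr : 0 < r)
    (n : ℕ) :
    circleAverage (fun z ↦ conj z ^ n * g z) 0 r = r ^ (2 * n) * taylorCoeff g n := by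
  -- `z̄ = r² / z` on the circle turns the average into Cauchy's integral for `iteratedDeriv n g 0`
  have hsphere : ∀ z ∈ sphere (0 : ℂ) |r|,
      conj z ^ n * g z = (r : ℂ) ^ (2 * n) • (1 / (z - 0) ^ n) • g z := by
    intro z hz
    rw [abs_of_pos hr] at hz
    rw [conj_eq_div_of_mem_sphere hz hr.ne']
    simp only [smul_eq_mul]
    ring
  have hcauchy : ∮ z in C(0, r), (z - 0)⁻¹ • (1 / (z - 0) ^ n) • g z
      = ∮ z in C(0, r), (1 / (z - 0) ^ (n + 1)) • g z := by
    apply circleIntegral.integral_congr hr.le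
    intro z _
    simp only [smul_eq_mul]
    ring
  rw [circleAverage_congr_sphere hsphere, circleAverage_fun_smul,
    circleAverage_eq_circleIntegral hr.ne', hcauchy,
    hg.circleIntegral_one_div_sub_center_pow_smul hr, taylorCoeff]
  have : (2 * π * I : ℂ) ≠ 0 := two_pi_I_ne_zero
  simp only [smul_eq_mul]
  field_simp

lemma circleAverage_conj_pow_mul_re (hg : DifferentiableOn ℂ g (closedBall 0 r)) (hr : 0 < r)
    (n : ℕ) :
    circleAverage (fun z ↦ conj z ^ (n + 1) * (((1 - conj z) * g z).re : ℂ)) 0 r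
      = 2⁻¹ * (r ^ (2 * (n + 1)) * taylorCoeff g (n + 1) - r ^ (2 * (n + 2)) * taylorCoeff g (n + 2)
          - r ^ 2 * 0 ^ n * conj (g 0)) := by
  -- since `z z̄ = r²` on the circle, the conjugated half is the mean of a holomorphic function
  have hsphere : ∀ z ∈ sphere (0 : ℂ) |r|, conj z ^ (n + 1) * (((1 - conj z) * g z).re : ℂ)
      = (2⁻¹ : ℂ) • ((conj z ^ (n + 1) * g z - conj z ^ (n + 2) * g z)
          + conj ((z - r ^ 2) * z ^ n * g z)) := by
    intro z hz
    rw [abs_of_pos hr] at hz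
    have hzz : z * conj z = r ^ 2 := by
      rw [conj_eq_div_of_mem_sphere hz hr.ne', mul_div_cancel₀ _ (ne_of_mem_sphere hz hr.ne')]
    rw [re_eq_add_conj, smul_eq_mul]
    simp only [map_sub, map_mul, map_pow, map_one, conj_conj, conj_ofReal]
    linear_combination (-2⁻¹ * conj z ^ n * conj (g z)) * hzz
  have hgc : ContinuousOn g (sphere 0 r) := hg.continuousOn.mono sphere_subset_closedBall
  have hint : ∀ h : ℂ → ℂ, ContinuousOn h (sphere 0 r) → CircleIntegrable h 0 r :=
    fun h hh ↦ hh.circleIntegrable hr.le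
  have hmean : circleAverage (fun z ↦ (z - r ^ 2) * z ^ n * g z) 0 r = -r ^ 2 * 0 ^ n * g 0 := by
    have hd : DifferentiableOn ℂ (fun z ↦ (z - r ^ 2) * z ^ n * g z) (closedBall 0 |r|) := by
      rw [abs_of_pos hr]; fun_prop
    rw [(hd.mono closure_ball_subset_closedBall).diffContOnCl.circleAverage]
    ring
  have hconj : circleAverage (fun z ↦ conj ((z - r ^ 2) * z ^ n * g z)) 0 r
      = conj (circleAverage (fun z ↦ (z - r ^ 2) * z ^ n * g z) 0 r) :=
    (conjCLE : ℂ ≃L[ℝ] ℂ).toContinuousLinearMap.circleAverage_comp_comm (hint _ (by fun_prop))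
  rw [circleAverage_congr_sphere hsphere, circleAverage_fun_smul, circleAverage_fun_add, hconj,
    circleAverage_fun_sub, hmean, circleAverage_conj_pow_mul hg hr,
    circleAverage_conj_pow_mul hg hr]
  · simp only [smul_eq_mul, map_mul, map_neg, map_pow, conj_ofReal, map_zero]
    ring
  all_goals exact hint _ (by fun_prop)

lemma norm_circleAverage_le {E : Type*} [NormedAddCommGroup E] [NormedSpace ℝ E] {f : ℂ → E}
    {c : ℂ} {R C : ℝ} (h : ∀ z ∈ sphere c |R|, ‖f z‖ ≤ C) : ‖circleAverage f c R‖ ≤ C := by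
  rw [circleAverage_def, norm_smul]
  calc ‖(2 * π)⁻¹‖ * ‖∫ θ in 0..2 * π, f (circleMap c R θ)‖
      ≤ (2 * π)⁻¹ * (C * |2 * π - 0|) := by
        rw [Real.norm_of_nonneg (by positivity)]
        gcongr
        exact intervalIntegral.norm_integral_le_of_norm_le_const
          fun θ _ ↦ h _ (circleMap_mem_sphere' c R θ)
    _ = C := by rw [sub_zero, abs_of_pos two_pi_pos]; field_simp

lemma taylorCoeff_succ_sub_taylorCoeff_succ_succ {M : ℝ} (hg : DifferentiableOn ℂ g (ball 0 1))
    (hu0 : ∀ z ∈ ball (0 : ℂ) 1, 0 ≤ ((1 - conj z) * g z).re)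
    (huM : ∀ z ∈ ball (0 : ℂ) 1, ((1 - conj z) * g z).re ≤ M * (1 - ‖z‖ ^ 2)) (n : ℕ) :
    taylorCoeff g (n + 1) - taylorCoeff g (n + 2) - 0 ^ n * conj (g 0) = 0 := by
  set p : ℝ → ℂ := fun r ↦ 2⁻¹ * (r ^ (2 * (n + 1)) * taylorCoeff g (n + 1)
    - r ^ (2 * (n + 2)) * taylorCoeff g (n + 2) - r ^ 2 * 0 ^ n * conj (g 0))
  have hp : Tendsto p (𝓝[<] 1)
      (𝓝 (2⁻¹ * (taylorCoeff g (n + 1) - taylorCoeff g (n + 2) - 0 ^ n * conj (g 0)))) := by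
    simpa [p] using tendsto_nhdsWithin_of_tendsto_nhds ((by fun_prop : Continuous p).tendsto 1)
  have hψ : Tendsto (fun r : ℝ ↦ M * (1 - r ^ 2)) (𝓝[<] 1) (𝓝 0) := by
    simpa using tendsto_nhdsWithin_of_tendsto_nhds
      ((by fun_prop : Continuous fun r : ℝ ↦ M * (1 - r ^ 2)).tendsto 1)
  have hbound : ∀ᶠ r in 𝓝[<] 1, ‖p r‖ ≤ M * (1 - r ^ 2) := by
    filter_upwards [Ioo_mem_nhdsLT zero_lt_one] with r ⟨hr0, hr1⟩
    simp only [p]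
    rw [← circleAverage_conj_pow_mul_re (hg.mono (closedBall_subset_ball hr1)) hr0]
    refine norm_circleAverage_le fun z hz ↦ ?_
    rw [abs_of_pos hr0] at hz
    have hz1 : z ∈ ball (0 : ℂ) 1 := sphere_subset_closedBall.trans (closedBall_subset_ball hr1) hz
    have hzr : ‖z‖ = r := by simpa using hz
    rw [norm_mul, norm_pow, RCLike.norm_conj, norm_real, Real.norm_of_nonneg (hu0 z hz1), hzr]
    calc r ^ (n + 1) * ((1 - conj z) * g z).re ≤ 1 * ((1 - conj z) * g z).re := by
          gcongr
          · exact hu0 z hz1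
          · exact pow_le_one₀ hr0.le hr1.le
      _ ≤ M * (1 - r ^ 2) := by rw [one_mul, ← hzr]; exact huM z hz1
  simpa using tendsto_nhds_unique hp (squeeze_zero_norm' hbound hψ)

lemma eq_add_mul_add_div_of_taylorCoeff_eq (hg : DifferentiableOn ℂ g (ball 0 1)) {a : ℂ}
    (ha : ∀ n, taylorCoeff g (n + 2) = a) {z : ℂ} (hz : z ∈ ball (0 : ℂ) 1) :
    g z = g 0 + taylorCoeff g 1 * z + a * z ^ 2 / (1 - z) := by
  have hseries : HasSum (fun n ↦ taylorCoeff g n * z ^ n) (g z) := by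
    have hterm : (fun n ↦ taylorCoeff g n * z ^ n)
        = fun n ↦ (n.factorial : ℂ)⁻¹ • (z - 0) ^ n • iteratedDeriv n g 0 := by
      funext n
      simp only [taylorCoeff, sub_zero, smul_eq_mul]
      ring
    rw [hterm]
    exact Complex.hasSum_taylorSeries_on_ball hg hz
  have htail : HasSum (fun n ↦ taylorCoeff g (n + 2) * z ^ (n + 2)) (a * z ^ 2 / (1 - z)) := by
    have hterm : (fun n ↦ taylorCoeff g (n + 2) * z ^ (n + 2)) = fun n ↦ a * z ^ 2 * z ^ n := by
      funext n
      rw [ha]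
      ring
    rw [hterm, div_eq_mul_inv]
    exact (hasSum_geometric_of_norm_lt_one (mem_ball_zero_iff.mp hz)).mul_left (a * z ^ 2)
  rw [hseries.unique ((hasSum_nat_add_iff 2).mp htail)]
  simp [Finset.sum_range_succ, taylorCoeff]
  ring

lemma normSq_one_sub_mul_lt_one {ω : ℂ} {t : ℝ} (ht : 0 < t) (htω : t * normSq ω < 2 * ω.re) :
    normSq (1 - t * ω) < 1 := by
  have : normSq (1 - t * ω) = 1 - t * (2 * ω.re - t * normSq ω) := by
    simp only [normSq_apply, sub_re, sub_im, one_re, one_im, mul_re, mul_im, ofReal_re, ofReal_im]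
    ring
  rw [this]
  nlinarith

lemma re_mul_conj_div_eq_zero {M : ℝ} {α β a ω : ℂ} (hω : 0 < ω.re)
    (hclosed : ∀ z ∈ ball (0 : ℂ) 1, g z = α + β * z + a * z ^ 2 / (1 - z))
    (hu0 : ∀ z ∈ ball (0 : ℂ) 1, 0 ≤ ((1 - conj z) * g z).re)
    (huM : ∀ z ∈ ball (0 : ℂ) 1, ((1 - conj z) * g z).re ≤ M * (1 - ‖z‖ ^ 2)) :
    (a * (conj ω / ω)).re = 0 := by
  have hω0 : ω ≠ 0 := fun h ↦ by simp [h] at hω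
  set z : ℝ → ℂ := fun t ↦ 1 - t * ω
  set φ : ℝ → ℝ := fun t ↦ (t * conj ω * (α + β * z t) + a * z t ^ 2 * (conj ω / ω)).re
  have hε : 0 < 2 * ω.re / normSq ω := div_pos (by linarith) (normSq_pos.mpr hω0)
  have hmem : ∀ t ∈ Set.Ioo 0 (2 * ω.re / normSq ω), z t ∈ ball (0 : ℂ) 1 := by
    rintro t ⟨ht0, htε⟩
    rw [mem_ball_zero_iff, ← sq_lt_one_iff₀ (norm_nonneg _), ← normSq_eq_norm_sq]
    exact normSq_one_sub_mul_lt_one ht0 ((lt_div_iff₀ (normSq_pos.mpr hω0)).mp htε)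
  have hbound : ∀ᶠ t in 𝓝[>] 0, ‖φ t‖ ≤ M * (1 - ‖z t‖ ^ 2) := by
    filter_upwards [Ioo_mem_nhdsGT hε] with t ht
    have ht0 : (t : ℂ) ≠ 0 := ofReal_ne_zero.mpr ht.1.ne'
    have hφt : φ t = ((1 - conj (z t)) * g (z t)).re := by
      rw [hclosed _ (hmem t ht)]
      simp only [φ, z, map_sub, map_one, map_mul, conj_ofReal, sub_sub_cancel]
      congr 1
      field_simp
    rw [hφt, Real.norm_of_nonneg (hu0 _ (hmem t ht))]
    exact huM _ (hmem t ht)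
  have hφ : Tendsto φ (𝓝[>] 0) (𝓝 (a * (conj ω / ω)).re) := by
    simpa [φ, z] using tendsto_nhdsWithin_of_tendsto_nhds ((by fun_prop : Continuous φ).tendsto 0)
  have hψ : Tendsto (fun t ↦ M * (1 - ‖z t‖ ^ 2)) (𝓝[>] 0) (𝓝 0) := by
    simpa [z] using tendsto_nhdsWithin_of_tendsto_nhds
      ((by fun_prop : Continuous fun t ↦ M * (1 - ‖z t‖ ^ 2)).tendsto 0)
  exact tendsto_nhds_unique hφ (squeeze_zero_norm' hbound hψ)

lemma re_one_sub_conj_mul_add_mul_conj (z w : ℂ) :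
    ((1 - conj z) * (w + z * conj w)).re = (1 - ‖z‖ ^ 2) * w.re := by
  rw [← normSq_eq_norm_sq]
  simp only [mul_re, mul_im, sub_re, sub_im, add_re, add_im, one_re, one_im, conj_re, conj_im,
    normSq_apply]
  ring

lemma eq_of_add_mul_conj_eq {z w v : ℂ} (hz : ‖z‖ < 1) (h : w + z * conj w = v + z * conj v) :
    w = v := by
  have hd : w - v = -(z * conj (w - v)) := by rw [map_sub]; linear_combination h
  have hnorm : ‖w - v‖ = ‖z‖ * ‖w - v‖ := by
    conv_lhs => rw [hd]
    rw [norm_neg, norm_mul, RCLike.norm_conj]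
  have : ‖w - v‖ = 0 := by nlinarith [norm_nonneg (w - v)]
  rwa [norm_eq_zero, sub_eq_zero] at this

end Scalar

theorem eq_apply_zero_of_differentiableOn_add_mul_conj {f : ℂ → ℂ} {M : ℝ}
    (hf0 : ∀ z ∈ ball (0 : ℂ) 1, 0 ≤ (f z).re) (hfM : ∀ z ∈ ball (0 : ℂ) 1, (f z).re ≤ M)
    (hg : DifferentiableOn ℂ (fun z ↦ f z + z * conj (f z)) (ball 0 1)) {z : ℂ}
    (hz : z ∈ ball (0 : ℂ) 1) : f z = f 0 := by
  set g := fun z ↦ f z + z * conj (f z)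
  have hweight : ∀ z ∈ ball (0 : ℂ) 1, 0 ≤ 1 - ‖z‖ ^ 2 := fun z hz ↦ by
    have := mem_ball_zero_iff.mp hz
    nlinarith [norm_nonneg z]
  have hu0 : ∀ z ∈ ball (0 : ℂ) 1, 0 ≤ ((1 - conj z) * g z).re := fun z hz ↦ by
    rw [re_one_sub_conj_mul_add_mul_conj]
    exact mul_nonneg (hweight z hz) (hf0 z hz)
  have huM : ∀ z ∈ ball (0 : ℂ) 1, ((1 - conj z) * g z).re ≤ M * (1 - ‖z‖ ^ 2) := fun z hz ↦ by
    rw [re_one_sub_conj_mul_add_mul_conj, mul_comm M]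
    exact mul_le_mul_of_nonneg_left (hfM z hz) (hweight z hz)
  have hrec := taylorCoeff_succ_sub_taylorCoeff_succ_succ hg hu0 huM
  have hconst : ∀ n, taylorCoeff g (n + 2) = taylorCoeff g 2 := by
    intro n
    induction n with
    | zero => rfl
    | succ n ih =>
      have h := hrec (n + 1)
      rw [zero_pow n.succ_ne_zero, zero_mul, sub_zero, ih, sub_eq_zero] at h
      exact h.symm
  have hclosed := fun z (hz : z ∈ ball (0 : ℂ) 1) ↦
    eq_add_mul_add_div_of_taylorCoeff_eq hg hconst hz
  have ha : taylorCoeff g 2 = 0 := by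
    have hre := re_mul_conj_div_eq_zero (ω := 1) one_pos hclosed hu0 huM
    have him := re_mul_conj_div_eq_zero (ω := 1 + I) (by simp) hclosed hu0 huM
    have hI : conj (1 + I) / (1 + I) = -I := by
      rw [div_eq_iff (by simp [Complex.ext_iff]), map_add, map_one, conj_I]
      linear_combination I_sq
    rw [map_one, div_one, mul_one] at hre
    rw [hI] at him
    simp only [mul_neg, neg_re, mul_I_re, neg_neg] at him
    exact Complex.ext hre him
  have h1 : taylorCoeff g 1 = conj (g 0) := by simpa [ha, sub_eq_zero] using hrec 0
  have hg0 : g 0 = f 0 := by simp [g]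
  refine eq_of_add_mul_conj_eq (mem_ball_zero_iff.mp hz) ?_
  calc f z + z * conj (f z) = g z := rfl
    _ = f 0 + z * conj (f 0) := by rw [hclosed z hz, ha, h1, hg0]; ring

section Operator

variable {H : Type*} [NormedAddCommGroup H] [InnerProductSpace ℂ H]

lemma reApplyInnerSelf_half_smul_add_adjoint [CompleteSpace H] (T : H →L[ℂ] H) (x : H) :
    ((1 / 2 : ℂ) • (T + adjoint T)).reApplyInnerSelf x = (inner ℂ x (T x)).re := by
  rw [reApplyInnerSelf_apply, smul_apply, add_apply, inner_smul_left, inner_add_left,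
    adjoint_inner_left]
  have : (inner ℂ x (T x)).re = (inner ℂ (T x) x).re := inner_re_symm (𝕜 := ℂ) x (T x)
  norm_num
  linarith

lemma inner_add_smul_adjoint_apply [CompleteSpace H] (T : H →L[ℂ] H) (w : ℂ) (x : H) :
    inner ℂ x ((T + w • adjoint T) x) = inner ℂ x (T x) + w * conj (inner ℂ x (T x)) := by
  rw [add_apply, smul_apply, inner_add_right, inner_smul_right, adjoint_inner_right,
    inner_conj_symm]

lemma reApplyInnerSelf_le_norm_sq_of_isPositive_one_sub {T : H →L[ℂ] H} (hT : (1 - T).IsPositive)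
    (x : H) : T.reApplyInnerSelf x ≤ ‖x‖ ^ 2 := by
  have := hT.2 x
  rw [reApplyInnerSelf_apply, sub_apply, one_apply_eq_self, inner_sub_left, map_sub,
    inner_self_eq_norm_sq] at this
  rw [reApplyInnerSelf_apply]
  linarith

end Operator

theorem stmt_1_general {H : Type*} [NormedAddCommGroup H] [InnerProductSpace ℂ H]
    [CompleteSpace H]
    (F : ℂ → H →L[ℂ] H)
    (hpos : ∀ z ∈ Metric.ball (0 : ℂ) 1,
      ((1 / 2 : ℂ) • (F z + adjoint (F z))).IsPositive)
    (hle : ∀ z ∈ Metric.ball (0 : ℂ) 1,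
      (1 - (1 / 2 : ℂ) • (F z + adjoint (F z))).IsPositive)
    (hhol : ∀ z ∈ Metric.ball (0 : ℂ) 1,
      DifferentiableAt ℂ (fun w => F w + w • adjoint (F w)) z) :
    ∃ C : H →L[ℂ] H, ∀ z ∈ Metric.ball (0 : ℂ) 1, F z = C := by
  refine ⟨F 0, fun z hz ↦ coe_injective <| (ext_inner_map _ _).mp fun x ↦ ?_⟩
  have hx : inner ℂ x (F z x) = inner ℂ x (F 0 x) := by
    refine eq_apply_zero_of_differentiableOn_add_mul_conj (f := fun w ↦ inner ℂ x (F w x))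
      (M := ‖x‖ ^ 2) (fun w hw ↦ ?_) (fun w hw ↦ ?_) (fun w hw ↦ ?_) hz
    · rw [← reApplyInnerSelf_half_smul_add_adjoint]
      exact (hpos w hw).2 x
    · rw [← reApplyInnerSelf_half_smul_add_adjoint]
      exact reApplyInnerSelf_le_norm_sq_of_isPositive_one_sub (hle w hw) x
    · simp_rw [← inner_add_smul_adjoint_apply]
      exact ((innerSL ℂ x).differentiableAt.comp w
        ((hhol w hw).clm_apply (differentiableAt_const x))).differentiableWithinAt
  simpa using congrArg conj hx

/-- If `F : D → B(H)` has `0 ≤ Re F(z) ≤ I` on the open unit disc and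
`z ↦ F(z) + z • F(z)*` is holomorphic on the disc, then `F` is constant on the disc. -/
theorem stmt_1 {H : Type*} [NormedAddCommGroup H] [InnerProductSpace ℂ H]
    [CompleteSpace H] [TopologicalSpace.SeparableSpace H]
    (F : ℂ → H →L[ℂ] H)
    (hpos : ∀ z ∈ Metric.ball (0 : ℂ) 1,
      ((1 / 2 : ℂ) • (F z + adjoint (F z))).IsPositive)
    (hle : ∀ z ∈ Metric.ball (0 : ℂ) 1,
      (1 - (1 / 2 : ℂ) • (F z + adjoint (F z))).IsPositive)
    (hhol : ∀ z ∈ Metric.ball (0 : ℂ) 1,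
      DifferentiableAt ℂ (fun w => F w + w • adjoint (F w)) z) :
    ∃ C : H →L[ℂ] H, ∀ z ∈ Metric.ball (0 : ℂ) 1, F z = C :=
  stmt_1_general F hpos hle hhol
end

section
/- Let F : D → ℂ satisfy 0 ≤ Re F(z) ≤ 1 for all z ∈ D, and suppose g(z) := F(z) + z·conj(F(z)) is holomorphic on D. Then the function h₁(z) := g(z)/(1 − z) is holomorphic on D and satisfies Re h₁(z) = (Re F(z))·(1 − |z|²)/|1 − z|² for all z ∈ D; in particular Re h₁(z) ≥ 0 on D. -/
open Complex ComplexConjugate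

lemma one_sub_ne_zero_of_mem_ball_zero_one {z : ℂ} (hz : z ∈ Metric.ball (0 : ℂ) 1) :
    1 - z ≠ 0 := by
  rintro h
  obtain rfl : z = 1 := (sub_eq_zero.mp h).symm
  simp at hz

/-- Multiplying numerator and denominator by `1 - conj z`, the cross term `z * conj a - a * conj z`
is purely imaginary. Both sides are `0` when `z = 1`. -/
lemma re_add_mul_conj_div_one_sub (a z : ℂ) :
    ((a + z * conj a) / (1 - z)).re = a.re * (1 - ‖z‖ ^ 2) / ‖1 - z‖ ^ 2 := by
  rw [div_re, Complex.sq_norm, Complex.sq_norm, ← add_div]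
  congr 1
  simp only [normSq_apply, add_re, add_im, mul_re, mul_im, sub_re, sub_im, conj_re, conj_im,
    one_re, one_im]
  ring

lemma re_add_mul_conj_div_one_sub_nonneg {a z : ℂ} (ha : 0 ≤ a.re) (hz : ‖z‖ ≤ 1) :
    0 ≤ ((a + z * conj a) / (1 - z)).re := by
  rw [re_add_mul_conj_div_one_sub]
  have : 0 ≤ 1 - ‖z‖ ^ 2 := by nlinarith [norm_nonneg z]
  positivity

/-- If `0 ≤ Re F ≤ 1` on the open unit disc and `g(z) = F(z) + z * conj (F z)` is
holomorphic on the disc, then `h₁(z) = g(z)/(1-z)` is holomorphic on the disc and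
`Re h₁(z) = Re F(z) · (1 - |z|²)/|1 - z|² ≥ 0` there. -/
theorem stmt_3 (F : ℂ → ℂ)
    (hre : ∀ z ∈ Metric.ball (0 : ℂ) 1, 0 ≤ (F z).re ∧ (F z).re ≤ 1)
    (hhol : ∀ z ∈ Metric.ball (0 : ℂ) 1,
      DifferentiableAt ℂ (fun w => F w + w * (starRingEnd ℂ) (F w)) z) :
    (∀ z ∈ Metric.ball (0 : ℂ) 1,
      DifferentiableAt ℂ (fun w => (F w + w * (starRingEnd ℂ) (F w)) / (1 - w)) z) ∧
    (∀ z ∈ Metric.ball (0 : ℂ) 1,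
      ((F z + z * (starRingEnd ℂ) (F z)) / (1 - z)).re
        = (F z).re * (1 - ‖z‖ ^ 2) / ‖1 - z‖ ^ 2 ∧
      0 ≤ ((F z + z * (starRingEnd ℂ) (F z)) / (1 - z)).re) := by
  refine ⟨fun z hz => ?_, fun z hz => ⟨re_add_mul_conj_div_one_sub _ _, ?_⟩⟩
  · exact (hhol z hz).div ((differentiableAt_const 1).sub differentiableAt_id)
      (one_sub_ne_zero_of_mem_ball_zero_one hz)
  · exact re_add_mul_conj_div_one_sub_nonneg (hre z hz).1 (mem_ball_zero_iff.mp hz).le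
end

section
/- Let h₁, h₂ : D → ℂ be holomorphic functions with Re h₁(z) ≥ 0 and Re h₂(z) ≥ 0 for all z ∈ D, and suppose h₁(z) + h₂(z) = (1 + z)/(1 − z) for all z ∈ D. Then for j = 1, 2 and all z ∈ D, h_j(z) = i·Im h_j(0) + (Re h_j(0))·(1 + z)/(1 − z). -/
/-!
For `h` holomorphic on the disc with `Re h ≥ 0` and `Re h 0 > 0`, the Schwarz lemma applied to
`(h - h 0) / (h + conj (h 0))` writes `h z = I * Im h(0) + Re h(0) * cayley u` with `‖u‖ ≤ ‖z‖`.
Since `cayley` maps the circle `‖u‖ = r` onto the circle of centre `cayley (r²)` and radius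
`ρ = 2r / (1 - r²)`, `h z` lies in the closed disc of radius `Re h(0) * ρ` around
`I * Im h(0) + Re h(0) * cayley (r²)`, `r = ‖z‖`; if `Re h 0 = 0` this disc is a point, as `h` is
then constant by the open mapping theorem. For `h₁ + h₂ = cayley` the two discs add up to the disc
of radius `ρ` around `cayley (r²)`, and `cayley z` lies on its boundary. Equality in the triangle
inequality then forces `h_j z - I * Im h_j(0) = Re h_j(0) * cayley z`.
-/

open Metric Set Complex ComplexConjugate

theorem eq_smul_add_of_norm_le_of_norm_add_eq {E : Type*} [NormedAddCommGroup E]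
    [NormedSpace ℝ E] [StrictConvexSpace ℝ E] {x y : E} {a b r : ℝ}
    (hx : ‖x‖ ≤ a * r) (hy : ‖y‖ ≤ b * r) (hab : a + b = 1) (hxy : ‖x + y‖ = r) :
    x = a • (x + y) := by
  have htri := norm_add_le x y
  have hr_split : a * r + b * r = r := by rw [← add_mul, hab, one_mul]
  have hxn : ‖x‖ = a * r := by linarith
  have hyn : ‖y‖ = b * r := by linarith
  have hray := (sameRay_iff_norm_add.2 (by linarith : ‖x + y‖ = ‖x‖ + ‖y‖)).norm_smul_eq
  rcases eq_or_ne r 0 with rfl | hr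
  · have hx0 : x = 0 := norm_le_zero_iff.1 (by simpa using hx)
    rw [norm_eq_zero.1 hxy, smul_zero, hx0]
  · rw [hxn, hyn, mul_comm a, mul_comm b, mul_smul, mul_smul] at hray
    have hba : a • y = b • x := smul_right_injective E hr hray
    rw [smul_add, hba, ← add_smul, hab, one_smul]

theorem eqOn_of_isMinOn_re {f : ℂ → ℂ} {U : Set ℂ} (hf : DifferentiableOn ℂ f U)
    (hU : IsOpen U) (hUc : IsPreconnected U) {z₀ : ℂ} (hz₀ : z₀ ∈ U)
    (hmin : IsMinOn (fun z ↦ (f z).re) U z₀) : EqOn f (fun _ ↦ f z₀) U := by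
  rcases (hf.analyticOnNhd hU).is_constant_or_isOpen hUc with ⟨w, hw⟩ | hopen
  · exact fun z hz ↦ (hw z hz).trans (hw z₀ hz₀).symm
  obtain ⟨ε, hε, hball⟩ := Metric.isOpen_iff.1 (hopen U subset_rfl hU) (f z₀) ⟨z₀, hz₀, rfl⟩
  obtain ⟨z, hz, hfz⟩ := hball (show f z₀ - (ε / 2 : ℝ) ∈ ball (f z₀) ε by
    simp [abs_of_pos hε, hε])
  have : (f z₀).re ≤ (f z).re := hmin hz
  rw [hfz, sub_re, ofReal_re] at this
  linarith

noncomputable def cayley (z : ℂ) : ℂ := (1 + z) / (1 - z)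

theorem cayley_sub_cayley {u t : ℂ} (hu : u ≠ 1) (ht : t ≠ 1) :
    cayley u - cayley t = 2 * (u - t) / ((1 - u) * (1 - t)) := by
  have hu' : 1 - u ≠ 0 := sub_ne_zero.2 hu.symm
  have ht' : 1 - t ≠ 0 := sub_ne_zero.2 ht.symm
  unfold cayley
  field_simp
  ring

theorem normSq_sub_ofReal_sq (u : ℂ) (r : ℝ) :
    normSq (u - (r ^ 2 : ℝ)) = r ^ 2 * normSq (1 - u) + (normSq u - r ^ 2) * (1 - r ^ 2) := by
  simp only [normSq_apply, sub_re, sub_im, one_re, one_im, ofReal_re, ofReal_im]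
  ring

theorem sq_norm_cayley_sub_cayley_sq {u : ℂ} {r : ℝ} (hu : u ≠ 1) (hr : r ^ 2 ≠ 1) :
    ‖cayley u - cayley (r ^ 2 : ℝ)‖ ^ 2
      = (2 * r / (1 - r ^ 2)) ^ 2 + 4 * (‖u‖ ^ 2 - r ^ 2) / (‖1 - u‖ ^ 2 * (1 - r ^ 2)) := by
  have hu' : normSq (1 - u) ≠ 0 := normSq_eq_zero.not.2 (sub_ne_zero.2 hu.symm)
  have hr' : 1 - r ^ 2 ≠ 0 := sub_ne_zero.2 hr.symm
  have hnorm : normSq (1 - (r ^ 2 : ℝ)) = (1 - r ^ 2) ^ 2 := by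
    rw [← ofReal_one, ← ofReal_sub, normSq_ofReal]; ring
  rw [cayley_sub_cayley hu (by exact_mod_cast hr)]
  simp only [Complex.sq_norm, normSq_div, normSq_mul, hnorm, normSq_sub_ofReal_sq]
  rw [show normSq 2 = 4 by norm_num [normSq_apply]]
  field_simp
  ring

theorem mapsTo_cayley_closedBall {r : ℝ} (hr : r < 1) :
    MapsTo cayley (closedBall 0 r) (closedBall (cayley (r ^ 2 : ℝ)) (2 * r / (1 - r ^ 2))) := by
  intro u hu
  rw [mem_closedBall_zero_iff] at hu
  have hr0 : 0 ≤ r := (norm_nonneg u).trans hu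
  have hr2 : 0 < 1 - r ^ 2 := by nlinarith
  have hu1 : u ≠ 1 := by rintro rfl; rw [norm_one] at hu; linarith
  have hsq := sq_norm_cayley_sub_cayley_sq (r := r) hu1 (by linarith)
  have hneg : 4 * (‖u‖ ^ 2 - r ^ 2) / (‖1 - u‖ ^ 2 * (1 - r ^ 2)) ≤ 0 :=
    div_nonpos_of_nonpos_of_nonneg (by nlinarith [norm_nonneg u]) (by positivity)
  rw [mem_closedBall, dist_eq_norm, ← pow_le_pow_iff_left₀ (norm_nonneg _) (by positivity)
    two_ne_zero]
  linarith

theorem mapsTo_cayley_sphere {r : ℝ} (hr : r < 1) :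
    MapsTo cayley (sphere 0 r) (sphere (cayley (r ^ 2 : ℝ)) (2 * r / (1 - r ^ 2))) := by
  intro u hu
  rw [mem_sphere_zero_iff_norm] at hu
  have hr0 : 0 ≤ r := hu ▸ norm_nonneg u
  have hr2 : 0 < 1 - r ^ 2 := by nlinarith
  have hu1 : u ≠ 1 := by rintro rfl; rw [norm_one] at hu; linarith
  have hsq := sq_norm_cayley_sub_cayley_sq (r := r) hu1 (by linarith)
  rw [hu, sub_self, mul_zero, zero_div, add_zero] at hsq
  rw [mem_sphere, dist_eq_norm, ← pow_left_inj₀ (norm_nonneg _) (by positivity) two_ne_zero]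
  exact hsq

theorem norm_sub_le_norm_add_conj {p q : ℂ} (hp : 0 ≤ p.re) (hq : 0 ≤ q.re) :
    ‖p - q‖ ≤ ‖p + conj q‖ := by
  rw [← sq_le_sq₀ (norm_nonneg _) (norm_nonneg _), Complex.sq_norm, Complex.sq_norm]
  simp only [normSq_apply, sub_re, sub_im, add_re, add_im, conj_re, conj_im]
  nlinarith [mul_nonneg hp hq]

theorem exists_norm_le_and_eq_cayley_of_re_nonneg {h : ℂ → ℂ}
    (hd : DifferentiableOn ℂ h (ball 0 1)) (hre : ∀ z ∈ ball (0 : ℂ) 1, 0 ≤ (h z).re)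
    (h0 : 0 < (h 0).re) {z : ℂ} (hz : z ∈ ball (0 : ℂ) 1) :
    ∃ u : ℂ, ‖u‖ ≤ ‖z‖ ∧ h z = I * (h 0).im + (h 0).re * cayley u := by
  set c := h 0
  have hden : ∀ w ∈ ball (0 : ℂ) 1, h w + conj c ≠ 0 := fun w hw hzero ↦ by
    have := congrArg re hzero
    rw [add_re, conj_re, zero_re] at this
    linarith [hre w hw]
  set ω : ℂ → ℂ := fun w ↦ (h w - c) / (h w + conj c)
  have hω_diff : DifferentiableOn ℂ ω (ball 0 1) :=
    (hd.sub_const c).div (hd.add_const (conj c)) hden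
  have hω_maps : MapsTo ω (ball 0 1) (closedBall 0 1) := fun w hw ↦ by
    rw [mem_closedBall_zero_iff, norm_div]
    exact div_le_one_of_le₀ (norm_sub_le_norm_add_conj (hre w hw) h0.le) (norm_nonneg _)
  have hω_zero : ω 0 = 0 := by simp [ω, c]
  have hω_le := norm_le_norm_of_mapsTo_ball hω_diff hω_maps hω_zero (mem_ball_zero_iff.1 hz)
  refine ⟨ω z, hω_le, ?_⟩
  have hω_ne : 1 - ω z ≠ 0 := by
    refine sub_ne_zero.2 fun h1 ↦ ?_
    have := h1 ▸ hω_le.trans_lt (mem_ball_zero_iff.1 hz)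
    simp at this
  have hω_z : ω z * (h z + conj c) = h z - c := div_mul_cancel₀ _ (hden z hz)
  have hc : c = c.re + c.im * I := (re_add_im c).symm
  have hc' : conj c = c.re - c.im * I := by
    apply Complex.ext <;> simp
  generalize ω z = w at hω_ne hω_z ⊢
  rw [cayley]
  field_simp
  linear_combination -hω_z + hc + w * hc'

theorem norm_sub_cayley_le_of_re_nonneg {h : ℂ → ℂ}
    (hd : DifferentiableOn ℂ h (ball 0 1)) (hre : ∀ z ∈ ball (0 : ℂ) 1, 0 ≤ (h z).re)
    {z : ℂ} (hz : z ∈ ball (0 : ℂ) 1) :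
    ‖h z - (I * (h 0).im + (h 0).re * cayley (‖z‖ ^ 2 : ℝ))‖
      ≤ (h 0).re * (2 * ‖z‖ / (1 - ‖z‖ ^ 2)) := by
  have h0_mem : (0 : ℂ) ∈ ball (0 : ℂ) 1 := mem_ball_self one_pos
  rcases (hre 0 h0_mem).eq_or_lt with h0 | h0
  · have hmin : IsMinOn (fun w ↦ (h w).re) (ball 0 1) 0 := fun w hw ↦
      show (h 0).re ≤ (h w).re from h0 ▸ hre w hw
    have hz_eq : h z = h 0 :=
      eqOn_of_isMinOn_re hd isOpen_ball (convex_ball 0 1).isPreconnected h0_mem hmin hz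
    have h0_eq : h 0 = I * (h 0).im := Complex.ext (by simp [← h0]) (by simp)
    rw [← h0, hz_eq, ofReal_zero, zero_mul, add_zero, ← h0_eq, sub_self, norm_zero, zero_mul]
  · obtain ⟨u, hu, hz_eq⟩ := exists_norm_le_and_eq_cayley_of_re_nonneg hd hre h0 hz
    have hu_mem := mapsTo_cayley_closedBall (mem_ball_zero_iff.1 hz)
      (mem_closedBall_zero_iff.2 hu)
    rw [mem_closedBall, dist_eq_norm] at hu_mem
    rw [hz_eq, add_sub_add_left_eq_sub, ← mul_sub, norm_mul, norm_real, Real.norm_of_nonneg h0.le]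
    exact mul_le_mul_of_nonneg_left hu_mem h0.le

/-- If `h₁, h₂` are holomorphic on the open unit disc with nonnegative real parts and
`h₁(z) + h₂(z) = (1+z)/(1-z)`, then each `h_j` has the form
`i·Im h_j(0) + Re h_j(0) · (1+z)/(1-z)`. -/
theorem stmt_4 (h₁ h₂ : ℂ → ℂ)
    (hd₁ : ∀ z ∈ Metric.ball (0 : ℂ) 1, DifferentiableAt ℂ h₁ z)
    (hd₂ : ∀ z ∈ Metric.ball (0 : ℂ) 1, DifferentiableAt ℂ h₂ z)
    (hre₁ : ∀ z ∈ Metric.ball (0 : ℂ) 1, 0 ≤ (h₁ z).re)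
    (hre₂ : ∀ z ∈ Metric.ball (0 : ℂ) 1, 0 ≤ (h₂ z).re)
    (hsum : ∀ z ∈ Metric.ball (0 : ℂ) 1, h₁ z + h₂ z = (1 + z) / (1 - z)) :
    ∀ z ∈ Metric.ball (0 : ℂ) 1,
      h₁ z = Complex.I * ((h₁ 0).im : ℂ) + ((h₁ 0).re : ℂ) * ((1 + z) / (1 - z)) ∧
      h₂ z = Complex.I * ((h₂ 0).im : ℂ) + ((h₂ 0).re : ℂ) * ((1 + z) / (1 - z)) := by
  intro z hz
  have hX : h₁ z + h₂ z = cayley z := hsum z hz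
  rw [show (1 + z) / (1 - z) = cayley z from rfl]
  have h0 : h₁ 0 + h₂ 0 = 1 := by simpa using hsum 0 (mem_ball_self one_pos)
  have hre : (h₁ 0).re + (h₂ 0).re = 1 := by simpa using congrArg re h0
  have him : ((h₁ 0).im : ℂ) + (h₂ 0).im = 0 := by exact_mod_cast by simpa using congrArg im h0
  have hbound₁ := norm_sub_cayley_le_of_re_nonneg
    (fun w hw ↦ (hd₁ w hw).differentiableWithinAt) hre₁ hz
  have hbound₂ := norm_sub_cayley_le_of_re_nonneg
    (fun w hw ↦ (hd₂ w hw).differentiableWithinAt) hre₂ hz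
  have hsphere := mapsTo_cayley_sphere (mem_ball_zero_iff.1 hz) (mem_sphere_zero_iff_norm.2 rfl)
  rw [mem_sphere, dist_eq_norm] at hsphere
  set x₁ := h₁ z - (I * (h₁ 0).im + (h₁ 0).re * cayley (‖z‖ ^ 2 : ℝ))
  set x₂ := h₂ z - (I * (h₂ 0).im + (h₂ 0).re * cayley (‖z‖ ^ 2 : ℝ))
  have hsplit : x₁ + x₂ = cayley z - cayley (‖z‖ ^ 2 : ℝ) := by
    have hre' : ((h₁ 0).re : ℂ) + (h₂ 0).re = 1 := by exact_mod_cast hre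
    linear_combination hX - I * him - cayley (‖z‖ ^ 2 : ℝ) * hre'
  have e₁ := eq_smul_add_of_norm_le_of_norm_add_eq hbound₁ hbound₂ hre (hsplit ▸ hsphere)
  have e₂ := eq_smul_add_of_norm_le_of_norm_add_eq hbound₂ hbound₁ (by linarith)
    (by rw [add_comm, hsplit, hsphere])
  rw [add_comm x₂, hsplit, real_smul] at e₂
  rw [hsplit, real_smul] at e₁
  exact ⟨by linear_combination e₁, by linear_combination e₂⟩
end

section
/- Let P₀ denote the set of holomorphic functions f on the open unit disc D with f(0) = 1 and Re f(z) > 0 for all z ∈ D. Then the function φ(z) = (1 + z)/(1 − z) is an extreme point of the convex set P₀; that is, if f₁, f₂ ∈ P₀ and 0 < t < 1 satisfy t·f₁(z) + (1 − t)·f₂(z) = φ(z) for all z ∈ D, then f₁ = f₂ = φ. -/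
/-!
The Cayley transform `w ↦ (w - 1) / (w + 1)` turns `f ∈ P₀` into a self-map of the disc fixing
`0`, so the Schwarz lemma gives `‖f'(0)‖ ≤ 2`, with equality only for `f(z) = (1 + cz) / (1 - cz)`,
`c = f'(0) / 2`. Since `φ'(0) = 2` and the closed disc of radius `2` is strictly convex,
`t f₁ + (1 - t) f₂ = φ` forces `f₁'(0) = f₂'(0) = 2`, hence `f₁ = f₂ = φ`.
-/

open Metric Set Filter

lemma eq_of_combo_eq_of_norm_le {E : Type*} [NormedAddCommGroup E] [NormedSpace ℝ E]
    [StrictConvexSpace ℝ E] {x y z : E} {a b : ℝ} (hx : ‖x‖ ≤ ‖z‖) (hy : ‖y‖ ≤ ‖z‖)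
    (ha : 0 < a) (hb : 0 < b) (hab : a + b = 1) (h : a • x + b • y = z) : x = z ∧ y = z := by
  obtain rfl : x = y := by
    by_contra hne
    exact (norm_combo_lt_of_ne hx hy hne ha hb hab).ne (congrArg norm h)
  rw [← add_smul, hab, one_smul] at h
  exact ⟨h, h⟩

lemma hasDerivAt_one_add_div_one_sub {z : ℂ} (hz : z ≠ 1) :
    HasDerivAt (fun w : ℂ => (1 + w) / (1 - w)) (2 / (1 - z) ^ 2) z := by
  have h := ((hasDerivAt_id z).const_add 1).fun_div ((hasDerivAt_id z).const_sub 1)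
    (sub_ne_zero.2 hz.symm)
  refine h.congr_deriv ?_
  simp only [id_eq, one_mul, mul_neg, mul_one, neg_add_rev]
  ring

namespace Complex

noncomputable def cayley (w : ℂ) : ℂ := (w - 1) / (w + 1)

@[simp]
lemma cayley_one : cayley 1 = 0 := by
  rw [cayley, sub_self, zero_div]

lemma add_one_ne_zero_of_re_pos {w : ℂ} (hw : 0 < w.re) : w + 1 ≠ 0 := by
  intro h
  have := congrArg re h
  simp only [add_re, one_re, zero_re] at this
  linarith

lemma norm_cayley_lt_one {w : ℂ} (hw : 0 < w.re) : ‖cayley w‖ < 1 := by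
  rw [cayley, norm_div, div_lt_one (norm_pos_iff.2 (add_one_ne_zero_of_re_pos hw)),
    ← sq_lt_sq₀ (norm_nonneg _) (norm_nonneg _), Complex.sq_norm, Complex.sq_norm,
    normSq_apply, normSq_apply]
  simp only [sub_re, add_re, sub_im, add_im, one_re, one_im]
  nlinarith

lemma eq_one_add_div_one_sub_of_cayley_eq {w u : ℂ} (hw : w + 1 ≠ 0) (hu : u ≠ 1)
    (h : cayley w = u) : w = (1 + u) / (1 - u) := by
  rw [cayley, div_eq_iff hw] at h
  rw [eq_div_iff (sub_ne_zero.2 hu.symm)]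
  linear_combination h

section Caratheodory

variable {f : ℂ → ℂ}

lemma differentiableOn_cayley_comp (hd : DifferentiableOn ℂ f (ball 0 1))
    (hre : ∀ z ∈ ball (0 : ℂ) 1, 0 < (f z).re) : DifferentiableOn ℂ (cayley ∘ f) (ball 0 1) :=
  (hd.sub_const 1).div (hd.add_const 1) fun z hz => add_one_ne_zero_of_re_pos (hre z hz)

lemma mapsTo_cayley_comp (h0 : f 0 = 1) (hre : ∀ z ∈ ball (0 : ℂ) 1, 0 < (f z).re) :
    MapsTo (cayley ∘ f) (ball 0 1) (closedBall ((cayley ∘ f) 0) 1) := by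
  intro z hz
  rw [Function.comp_apply, h0, cayley_one, mem_closedBall_zero_iff]
  exact (norm_cayley_lt_one (hre z hz)).le

lemma hasDerivAt_cayley_comp_zero (hd : DifferentiableAt ℂ f 0) (h0 : f 0 = 1) :
    HasDerivAt (cayley ∘ f) (deriv f 0 / 2) 0 := by
  have h := (hd.hasDerivAt.sub_const 1).fun_div (hd.hasDerivAt.add_const 1) (by norm_num [h0])
  refine h.congr_deriv ?_
  rw [h0]
  ring

lemma norm_deriv_le_two_of_re_pos (hd : DifferentiableOn ℂ f (ball 0 1)) (h0 : f 0 = 1)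
    (hre : ∀ z ∈ ball (0 : ℂ) 1, 0 < (f z).re) : ‖deriv f 0‖ ≤ 2 := by
  have h := norm_deriv_le_div_of_mapsTo_ball (differentiableOn_cayley_comp hd hre)
    (mapsTo_cayley_comp h0 hre) one_pos
  rw [(hasDerivAt_cayley_comp_zero (hd.differentiableAt (ball_mem_nhds 0 one_pos)) h0).deriv,
    norm_div, div_one] at h
  norm_num at h
  linarith

lemma eq_one_add_div_one_sub_of_norm_deriv_eq_two (hd : DifferentiableOn ℂ f (ball 0 1))
    (h0 : f 0 = 1) (hre : ∀ z ∈ ball (0 : ℂ) 1, 0 < (f z).re) (h2 : ‖deriv f 0‖ = 2) :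
    ∀ z ∈ ball (0 : ℂ) 1, f z = (1 + deriv f 0 / 2 * z) / (1 - deriv f 0 / 2 * z) := by
  have hslope : dslope (cayley ∘ f) 0 0 = deriv f 0 / 2 := by
    rw [dslope_same,
      (hasDerivAt_cayley_comp_zero (hd.differentiableAt (ball_mem_nhds 0 one_pos)) h0).deriv]
  have haffine := affine_of_mapsTo_ball_of_norm_dslope_eq_div
    (differentiableOn_cayley_comp hd hre) (mapsTo_cayley_comp h0 hre) (mem_ball_self one_pos)
    (by rw [hslope, norm_div, h2]; norm_num)
  intro z hz
  refine eq_one_add_div_one_sub_of_cayley_eq (add_one_ne_zero_of_re_pos (hre z hz)) ?_ ?_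
  · refine ne_of_apply_ne norm (ne_of_lt ?_)
    rw [norm_one, norm_mul, norm_div, h2, RCLike.norm_ofNat, div_self two_ne_zero, one_mul]
    exact mem_ball_zero_iff.1 hz
  · have h := haffine hz
    rw [hslope] at h
    simpa [h0, mul_comm] using h

end Caratheodory

end Complex

/-- The function `φ(z) = (1+z)/(1-z)` is an extreme point of the convex set `P₀` of
holomorphic functions on the open unit disc with `f(0) = 1` and positive real part:
any proper convex combination of members of `P₀` equal to `φ` forces both members to be `φ`. -/
theorem stmt_5 (f₁ f₂ : ℂ → ℂ) (t : ℝ) (ht₀ : 0 < t) (ht₁ : t < 1)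
    (hd₁ : ∀ z ∈ Metric.ball (0 : ℂ) 1, DifferentiableAt ℂ f₁ z)
    (hd₂ : ∀ z ∈ Metric.ball (0 : ℂ) 1, DifferentiableAt ℂ f₂ z)
    (h₁0 : f₁ 0 = 1) (h₂0 : f₂ 0 = 1)
    (hre₁ : ∀ z ∈ Metric.ball (0 : ℂ) 1, 0 < (f₁ z).re)
    (hre₂ : ∀ z ∈ Metric.ball (0 : ℂ) 1, 0 < (f₂ z).re)
    (hconv : ∀ z ∈ Metric.ball (0 : ℂ) 1,
      (t : ℂ) * f₁ z + ((1 - t : ℝ) : ℂ) * f₂ z = (1 + z) / (1 - z)) :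
    ∀ z ∈ Metric.ball (0 : ℂ) 1,
      f₁ z = (1 + z) / (1 - z) ∧ f₂ z = (1 + z) / (1 - z) := by
  have hD₁ : DifferentiableOn ℂ f₁ (ball 0 1) := fun z hz => (hd₁ z hz).differentiableWithinAt
  have hD₂ : DifferentiableOn ℂ f₂ (ball 0 1) := fun z hz => (hd₂ z hz).differentiableWithinAt
  have hcombo : t • deriv f₁ 0 + (1 - t) • deriv f₂ 0 = 2 := by
    have hφ := (hasDerivAt_one_add_div_one_sub zero_ne_one).congr_of_eventuallyEq
      (eventuallyEq_of_mem (ball_mem_nhds 0 one_pos) hconv)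
    have h := ((hd₁ 0 (mem_ball_self one_pos)).hasDerivAt.const_mul (t : ℂ)).add
      ((hd₂ 0 (mem_ball_self one_pos)).hasDerivAt.const_mul ((1 - t : ℝ) : ℂ))
    simpa [Complex.real_smul] using h.unique hφ
  have hnorm₂ : ‖(2 : ℂ)‖ = 2 := RCLike.norm_ofNat 2
  obtain ⟨hderiv₁, hderiv₂⟩ := eq_of_combo_eq_of_norm_le
    (hnorm₂ ▸ Complex.norm_deriv_le_two_of_re_pos hD₁ h₁0 hre₁)
    (hnorm₂ ▸ Complex.norm_deriv_le_two_of_re_pos hD₂ h₂0 hre₂)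
    ht₀ (sub_pos.2 ht₁) (by ring) hcombo
  intro z hz
  constructor
  · simpa [hderiv₁] using
      Complex.eq_one_add_div_one_sub_of_norm_deriv_eq_two hD₁ h₁0 hre₁ (hderiv₁ ▸ hnorm₂) z hz
  · simpa [hderiv₂] using
      Complex.eq_one_add_div_one_sub_of_norm_deriv_eq_two hD₂ h₂0 hre₂ (hderiv₂ ▸ hnorm₂) z hz
end

section
/- Let E be a finite-dimensional complex Hilbert space and let ψ₁, ψ₂ : D → B(E) be holomorphic functions with ‖ψ_j(z)‖ ≤ 1 for all z ∈ D and j = 1, 2, such that I − ψ_j(z) is invertible for every z ∈ D, and such that (I + ψ₁(z))(I − ψ₁(z))⁻¹ + (I + ψ₂(z))(I − ψ₂(z))⁻¹ = ((1 + z)/(1 − z))·I for all z ∈ D. Then for every z ∈ D the real parts satisfy 0 ≤ Re[(I + ψ_j(z))(I − ψ_j(z))⁻¹] ≤ ((1 − |z|²)/|1 − z|²)·I for j = 1, 2. -/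
/-!
For a contraction `ψ` with `1 - ψ` invertible, writing `x = (1 - ψ) y` gives
`Re ⟪(1 + ψ)(1 - ψ)⁻¹ x, x⟫ = ‖y‖² - ‖ψ y‖² ≥ 0`, so both real parts are positive.
Taking real parts in the hypothesis, they add up to `Re ((1 + z)/(1 - z)) • 1`, so the upper bound
for one of them is the positivity of the other.
-/

open ContinuousLinearMap

theorem re_inner_add_sub_eq_norm_sq_sub_norm_sq {𝕜 F : Type*} [RCLike 𝕜] [NormedAddCommGroup F]
    [InnerProductSpace 𝕜 F] (x y : F) :
    RCLike.re (inner 𝕜 (x + y) (x - y)) = ‖x‖ ^ 2 - ‖y‖ ^ 2 := by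
  simp only [inner_add_left, inner_sub_right, map_sub, map_add, inner_re_symm (𝕜 := 𝕜) y x,
    inner_self_eq_norm_sq]
  ring

theorem Complex.re_one_add_div_one_sub (z : ℂ) :
    ((1 + z) / (1 - z)).re = (1 - ‖z‖ ^ 2) / ‖1 - z‖ ^ 2 := by
  rw [Complex.div_re, ← add_div, ← Complex.normSq_eq_norm_sq, Complex.sq_norm,
    Complex.normSq_apply z]
  simp only [Complex.add_re, Complex.one_re, Complex.sub_re, Complex.add_im, Complex.one_im,
    zero_add, Complex.sub_im, zero_sub, mul_neg]
  ring

namespace ContinuousLinearMap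

variable {E : Type*} [NormedAddCommGroup E] [InnerProductSpace ℂ E] [CompleteSpace E]

theorem re_inner_half_add_adjoint_apply (T : E →L[ℂ] E) (x : E) :
    (inner ℂ (((1 / 2 : ℂ) • (T + adjoint T)) x) x).re = (inner ℂ (T x) x).re := by
  rw [smul_apply, add_apply, inner_smul_left, inner_add_left, adjoint_inner_left,
    ← inner_conj_symm x, Complex.add_conj]
  norm_num
  ring

theorem isPositive_half_add_adjoint {T : E →L[ℂ] E} (hT : ∀ x, 0 ≤ (inner ℂ (T x) x).re) :
    ((1 / 2 : ℂ) • (T + adjoint T)).IsPositive := by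
  refine isPositive_def'.2 ⟨?_, fun x => ?_⟩
  · rw [IsSelfAdjoint, star_smul, star_add, star_eq_adjoint, star_eq_adjoint, adjoint_adjoint,
      add_comm]
    norm_num
  · rw [reApplyInnerSelf, RCLike.re_to_complex, re_inner_half_add_adjoint_apply]
    exact hT x

theorem isPositive_half_add_adjoint_cayley {ψ : E →L[ℂ] E} (hψ : ‖ψ‖ ≤ 1) (h : IsUnit (1 - ψ)) :
    ((1 / 2 : ℂ) • ((1 + ψ) * Ring.inverse (1 - ψ) +
        adjoint ((1 + ψ) * Ring.inverse (1 - ψ)))).IsPositive := by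
  refine isPositive_half_add_adjoint fun x => ?_
  obtain ⟨y, rfl⟩ : ∃ y, (1 - ψ) y = x :=
    ⟨Ring.inverse (1 - ψ) x, congr($(Ring.mul_inverse_cancel _ h) x)⟩
  have hy : Ring.inverse (1 - ψ) ((1 - ψ) y) = y := congr($(Ring.inverse_mul_cancel _ h) y)
  rw [mul_apply_eq_comp, hy, ← RCLike.re_to_complex]
  simp only [add_apply, sub_apply, one_apply_eq_self, re_inner_add_sub_eq_norm_sq_sub_norm_sq]
  have hψy : ‖ψ y‖ ≤ ‖y‖ := (ψ.le_of_opNorm_le hψ y).trans_eq (one_mul _)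
  exact sub_nonneg.2 (pow_le_pow_left₀ (norm_nonneg _) hψy 2)

theorem sub_half_add_adjoint_eq {S T : E →L[ℂ] E} {w : ℂ} (h : S + T = w • 1) :
    (w.re : ℂ) • 1 - (1 / 2 : ℂ) • (S + adjoint S) = (1 / 2 : ℂ) • (T + adjoint T) := by
  have hadj : adjoint S + adjoint T = (starRingEnd ℂ w) • 1 := by
    simpa only [star_add, star_smul, star_one, star_eq_adjoint, RCLike.star_def] using
      congrArg star h
  have hre : (w.re : ℂ) = (1 / 2 : ℂ) * (w + starRingEnd ℂ w) := by
    rw [Complex.add_conj]; push_cast; ring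
  rw [sub_eq_iff_eq_add, ← smul_add, hre, ← smul_smul, add_smul, ← h, ← hadj]
  congr 1
  abel

end ContinuousLinearMap

theorem stmt_10_general {E : Type*} [NormedAddCommGroup E] [InnerProductSpace ℂ E]
    [FiniteDimensional ℂ E]
    (ψ₁ ψ₂ : ℂ → E →L[ℂ] E)
    (hn₁ : ∀ z ∈ Metric.ball (0 : ℂ) 1, ‖ψ₁ z‖ ≤ 1)
    (hn₂ : ∀ z ∈ Metric.ball (0 : ℂ) 1, ‖ψ₂ z‖ ≤ 1)
    (hinv₁ : ∀ z ∈ Metric.ball (0 : ℂ) 1, IsUnit (1 - ψ₁ z))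
    (hinv₂ : ∀ z ∈ Metric.ball (0 : ℂ) 1, IsUnit (1 - ψ₂ z))
    (hsum : ∀ z ∈ Metric.ball (0 : ℂ) 1,
      (1 + ψ₁ z) * Ring.inverse (1 - ψ₁ z) + (1 + ψ₂ z) * Ring.inverse (1 - ψ₂ z)
        = ((1 + z) / (1 - z)) • (1 : E →L[ℂ] E)) :
    ∀ z ∈ Metric.ball (0 : ℂ) 1,
      ((1 / 2 : ℂ) • ((1 + ψ₁ z) * Ring.inverse (1 - ψ₁ z) +
          adjoint ((1 + ψ₁ z) * Ring.inverse (1 - ψ₁ z)))).IsPositive ∧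
      ((((1 - ‖z‖ ^ 2) / ‖1 - z‖ ^ 2 : ℝ) : ℂ) • (1 : E →L[ℂ] E) -
        (1 / 2 : ℂ) • ((1 + ψ₁ z) * Ring.inverse (1 - ψ₁ z) +
          adjoint ((1 + ψ₁ z) * Ring.inverse (1 - ψ₁ z)))).IsPositive ∧
      ((1 / 2 : ℂ) • ((1 + ψ₂ z) * Ring.inverse (1 - ψ₂ z) +
          adjoint ((1 + ψ₂ z) * Ring.inverse (1 - ψ₂ z)))).IsPositive ∧
      ((((1 - ‖z‖ ^ 2) / ‖1 - z‖ ^ 2 : ℝ) : ℂ) • (1 : E →L[ℂ] E) -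
        (1 / 2 : ℂ) • ((1 + ψ₂ z) * Ring.inverse (1 - ψ₂ z) +
          adjoint ((1 + ψ₂ z) * Ring.inverse (1 - ψ₂ z)))).IsPositive := by
  intro z hz
  have hpos₁ := isPositive_half_add_adjoint_cayley (hn₁ z hz) (hinv₁ z hz)
  have hpos₂ := isPositive_half_add_adjoint_cayley (hn₂ z hz) (hinv₂ z hz)
  rw [← Complex.re_one_add_div_one_sub, sub_half_add_adjoint_eq (hsum z hz),
    sub_half_add_adjoint_eq ((add_comm _ _).trans (hsum z hz))]
  exact ⟨hpos₁, hpos₂, hpos₂, hpos₁⟩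

set_option maxHeartbeats 1000000 in
/-- If `ψ₁, ψ₂ : D → B(E)` are holomorphic contraction-valued functions with `I - ψ_j(z)`
invertible whose Cayley transforms sum to `((1+z)/(1-z)) • I`, then for every `z` in the disc,
`0 ≤ Re[(I + ψ_j(z))(I - ψ_j(z))⁻¹] ≤ ((1-|z|²)/|1-z|²) • I` for `j = 1, 2`. -/
theorem stmt_10 {E : Type*} [NormedAddCommGroup E] [InnerProductSpace ℂ E]
    [FiniteDimensional ℂ E]
    (ψ₁ ψ₂ : ℂ → E →L[ℂ] E)
    (hd₁ : ∀ z ∈ Metric.ball (0 : ℂ) 1, DifferentiableAt ℂ ψ₁ z)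
    (hd₂ : ∀ z ∈ Metric.ball (0 : ℂ) 1, DifferentiableAt ℂ ψ₂ z)
    (hn₁ : ∀ z ∈ Metric.ball (0 : ℂ) 1, ‖ψ₁ z‖ ≤ 1)
    (hn₂ : ∀ z ∈ Metric.ball (0 : ℂ) 1, ‖ψ₂ z‖ ≤ 1)
    (hinv₁ : ∀ z ∈ Metric.ball (0 : ℂ) 1, IsUnit (1 - ψ₁ z))
    (hinv₂ : ∀ z ∈ Metric.ball (0 : ℂ) 1, IsUnit (1 - ψ₂ z))
    (hsum : ∀ z ∈ Metric.ball (0 : ℂ) 1,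
      (1 + ψ₁ z) * Ring.inverse (1 - ψ₁ z) + (1 + ψ₂ z) * Ring.inverse (1 - ψ₂ z)
        = ((1 + z) / (1 - z)) • (1 : E →L[ℂ] E)) :
    ∀ z ∈ Metric.ball (0 : ℂ) 1,
      ((1 / 2 : ℂ) • ((1 + ψ₁ z) * Ring.inverse (1 - ψ₁ z) +
          adjoint ((1 + ψ₁ z) * Ring.inverse (1 - ψ₁ z)))).IsPositive ∧
      ((((1 - ‖z‖ ^ 2) / ‖1 - z‖ ^ 2 : ℝ) : ℂ) • (1 : E →L[ℂ] E) -
        (1 / 2 : ℂ) • ((1 + ψ₁ z) * Ring.inverse (1 - ψ₁ z) +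
          adjoint ((1 + ψ₁ z) * Ring.inverse (1 - ψ₁ z)))).IsPositive ∧
      ((1 / 2 : ℂ) • ((1 + ψ₂ z) * Ring.inverse (1 - ψ₂ z) +
          adjoint ((1 + ψ₂ z) * Ring.inverse (1 - ψ₂ z)))).IsPositive ∧
      ((((1 - ‖z‖ ^ 2) / ‖1 - z‖ ^ 2 : ℝ) : ℂ) • (1 : E →L[ℂ] E) -
        (1 / 2 : ℂ) • ((1 + ψ₂ z) * Ring.inverse (1 - ψ₂ z) +
          adjoint ((1 + ψ₂ z) * Ring.inverse (1 - ψ₂ z)))).IsPositive :=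
  stmt_10_general ψ₁ ψ₂ hn₁ hn₂ hinv₁ hinv₂ hsum
end

section
/- Let E be a finite-dimensional complex Hilbert space, let A, B ∈ B(E) be self-adjoint with 0 ≤ B ≤ I, and let t ≥ 0. Then for every z ∈ D, the operator exp(t·(i·A + ((z + 1)/(z − 1))·B)) has norm at most 1, and the map z ↦ exp(t·(i·A + ((z + 1)/(z − 1))·B)) is holomorphic on D. -/
/-!
For `|z| < 1` the number `c = (z + 1)/(z - 1)` has `Re c = -(1 - |z|²)/|1 - z|² ≤ 0`, so for
`M = t (iA + cB)` one gets `Re ⟪M x, x⟫ = t · Re c · ⟪B x, x⟫ ≤ 0`: the generator is dissipative.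
Then `s ↦ ‖exp (s M) x‖²` has derivative `2 Re ⟪M y, y⟫ ≤ 0` (with `y = exp (s M) x`), so it
decreases from `‖x‖²` at `s = 0`, and `exp M` is a contraction. Holomorphy holds because `exp`
is entire and `z ↦ (z + 1)/(z - 1)` is holomorphic away from `z = 1`.
-/

open ContinuousLinearMap NormedSpace RCLike

namespace ContinuousLinearMap

variable {𝕜 E : Type*} [RCLike 𝕜] [NormedAddCommGroup E] [InnerProductSpace 𝕜 E]

def IsDissipative (M : E →L[𝕜] E) : Prop :=
  ∀ x, re (inner 𝕜 (M x) x) ≤ 0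

theorem _root_.LinearMap.IsSymmetric.re_inner_smul_apply_self {T : E →ₗ[𝕜] E}
    (hT : T.IsSymmetric) (c : 𝕜) (x : E) :
    re (inner 𝕜 (c • T x) x) = re c * re (inner 𝕜 (T x) x) := by
  conv_lhs => rw [inner_smul_left, ← hT.coe_re_inner_apply_self, re_mul_ofReal, conj_re]

theorem IsSelfAdjoint.isDissipative_smul [CompleteSpace E] {T : E →L[𝕜] E} (hT : IsSelfAdjoint T)
    {c : 𝕜} (hc : re c = 0) : (c • T).IsDissipative := fun x =>
  (hT.isSymmetric.re_inner_smul_apply_self c x).trans_le (by rw [hc, zero_mul])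

theorem IsPositive.isDissipative_smul {T : E →L[𝕜] E} (hT : T.IsPositive) {c : 𝕜}
    (hc : re c ≤ 0) : (c • T).IsDissipative := fun x =>
  (hT.isSymmetric.re_inner_smul_apply_self c x).trans_le
    (mul_nonpos_of_nonpos_of_nonneg hc (hT.re_inner_nonneg_left x))

namespace IsDissipative

variable {M N : E →L[𝕜] E}

theorem add (hM : M.IsDissipative) (hN : N.IsDissipative) : (M + N).IsDissipative := fun x => by
  simpa only [add_apply, inner_add_left, map_add] using add_nonpos (hM x) (hN x)

theorem ofReal_smul (hM : M.IsDissipative) {t : ℝ} (ht : 0 ≤ t) :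
    ((t : 𝕜) • M).IsDissipative := fun x => by
  rw [smul_apply, inner_smul_left, conj_ofReal, re_ofReal_mul]
  exact mul_nonpos_of_nonneg_of_nonpos ht (hM x)

theorem norm_exp_le_one [CompleteSpace E] (hM : M.IsDissipative) : ‖exp M‖ ≤ 1 := by
  refine opNorm_le_bound _ zero_le_one fun x => ?_
  let _ := InnerProductSpace.rclikeToReal 𝕜 E
  set g : ℝ → E := fun s => exp ((s : 𝕜) • M) x
  have hg : ∀ s, HasDerivAt g (M (g s)) s := fun s => by
    have h𝕜 : HasDerivAt (fun u : 𝕜 => exp (u • M) x) (M (exp ((s : 𝕜) • M) x)) s := by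
      simpa [Function.comp_def, mul_apply] using (apply 𝕜 E x).hasFDerivAt.comp_hasDerivAt _
        (hasDerivAt_exp_smul_const' M (s : 𝕜))
    have hofReal : HasDerivAt (fun s : ℝ => (s : 𝕜)) 1 s := by
      simpa using (ofRealCLM (K := 𝕜)).hasDerivAt
    exact ((h𝕜.hasFDerivAt.restrictScalars ℝ).comp_hasDerivAt s hofReal).congr_deriv (by simp [g])
  have hanti : Antitone (‖g ·‖ ^ 2) := by
    refine antitone_of_hasDerivAt_nonpos (fun s => (hg s).norm_sq) fun s => ?_
    rw [real_inner_eq_re_inner, inner_re_symm]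
    exact mul_nonpos_of_nonneg_of_nonpos zero_le_two (hM _)
  have h01 : ‖exp M x‖ ^ 2 ≤ ‖x‖ ^ 2 := by
    simpa [g] using hanti zero_le_one
  rw [one_mul]
  exact (pow_le_pow_iff_left₀ (norm_nonneg _) (norm_nonneg _) two_ne_zero).mp h01

end IsDissipative

end ContinuousLinearMap

-- At `z = 1` the quotient is the junk value `2 / 0 = 0`.
theorem Complex.re_add_one_div_sub_one_nonpos {z : ℂ} (hz : ‖z‖ ≤ 1) :
    ((z + 1) / (z - 1)).re ≤ 0 := by
  have hz2 : z.re * z.re + z.im * z.im ≤ 1 := by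
    rw [← normSq_apply, ← Complex.sq_norm]; nlinarith [norm_nonneg z]
  rw [div_re, ← add_div]
  apply div_nonpos_of_nonpos_of_nonneg _ (normSq_nonneg _)
  simp only [add_re, sub_re, one_re, add_im, sub_im, one_im]
  nlinarith

theorem stmt_12_general {E : Type*} [NormedAddCommGroup E] [InnerProductSpace ℂ E]
    [FiniteDimensional ℂ E]
    (A B : E →L[ℂ] E) (hA : IsSelfAdjoint A)
    (hBpos : B.IsPositive) (t : ℝ) (ht : 0 ≤ t) :
    (∀ z ∈ Metric.ball (0 : ℂ) 1,
      ‖NormedSpace.exp ((t : ℂ) • (Complex.I • A + ((z + 1) / (z - 1)) • B))‖ ≤ 1) ∧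
    (∀ z ∈ Metric.ball (0 : ℂ) 1,
      DifferentiableAt ℂ
        (fun w => NormedSpace.exp ((t : ℂ) • (Complex.I • A + ((w + 1) / (w - 1)) • B)))
        z) := by
  refine ⟨fun z hz => ?_, fun z hz => ?_⟩
  · have hc := Complex.re_add_one_div_sub_one_nonpos (mem_ball_zero_iff.mp hz).le
    exact (((hA.isDissipative_smul Complex.I_re).add
      (hBpos.isDissipative_smul hc)).ofReal_smul ht).norm_exp_le_one
  · have hz1 : z - 1 ≠ 0 := sub_ne_zero.mpr (ne_of_mem_of_not_mem hz (by simp))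
    exact (exp_analytic _).differentiableAt.comp z (by fun_prop (disch := exact hz1))

set_option maxHeartbeats 1000000 in
/-- For self-adjoint `A, B ∈ B(E)` with `0 ≤ B ≤ I` and `t ≥ 0`, the map
`z ↦ exp(t • (i•A + ((z+1)/(z-1))•B))` is contraction-valued and holomorphic on the
open unit disc. -/
theorem stmt_12 {E : Type*} [NormedAddCommGroup E] [InnerProductSpace ℂ E]
    [FiniteDimensional ℂ E]
    (A B : E →L[ℂ] E) (hA : IsSelfAdjoint A) (hB : IsSelfAdjoint B)
    (hBpos : B.IsPositive) (hBle : (1 - B).IsPositive) (t : ℝ) (ht : 0 ≤ t) :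
    (∀ z ∈ Metric.ball (0 : ℂ) 1,
      ‖NormedSpace.exp ((t : ℂ) • (Complex.I • A + ((z + 1) / (z - 1)) • B))‖ ≤ 1) ∧
    (∀ z ∈ Metric.ball (0 : ℂ) 1,
      DifferentiableAt ℂ
        (fun w => NormedSpace.exp ((t : ℂ) • (Complex.I • A + ((w + 1) / (w - 1)) • B)))
        z) :=
  stmt_12_general A B hA hBpos t ht
end
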